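/- arXiv:1911.12873 — 5 statements merged into one kernel-verified Lean document; each statement's English description precedes it below -/
import Mathlib

section
/- Let A be a *-subalgebra of B(H), J an antilinear isometry on H, and ν ∈ B(H) invertible with ν* = ν. Suppose for all a, b ∈ A the commutator [a, J(νbν⁻¹)J⁻¹] = 0. Then for all a, b ∈ A also [a, J(ν⁻¹bν)J⁻¹] = 0. -/
/-!
Conjugating by the antiunitary `J` and by the self-adjoint `ν` both turn adjoints into adjoints,
so `J ν⁻¹ b ν J⁻¹` is the adjoint of `J ν b* ν⁻¹ J⁻¹`. Taking adjoints in the commutation relation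
`[a*, J ν b* ν⁻¹ J⁻¹] = 0`, which holds since `A` is a `*`-algebra, gives `[a, J ν⁻¹ b ν J⁻¹] = 0`.
-/

open scoped InnerProductSpace

section Antiunitary

variable {E F : Type*} [SeminormedAddCommGroup E] [InnerProductSpace ℂ E]
  [SeminormedAddCommGroup F] [InnerProductSpace ℂ F]

theorem LinearIsometry.inner_map_map_of_antilinear (f : E →ₗᵢ⋆[ℂ] F) (x y : E) :
    ⟪f x, f y⟫_ℂ = ⟪y, x⟫_ℂ := by
  have hI : Complex.I • f y = f (-Complex.I • y) := by
    rw [f.map_smulₛₗ]; simp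
  -- Multiplication by `I` is isometric, and it swaps the imaginary polarization terms of
  -- `⟪x, y⟫` with those of `⟪y, x⟫`.
  have rotate : ∀ u v : E, ‖u + Complex.I • v‖ = ‖v - Complex.I • u‖ := fun u v => by
    rw [← one_mul ‖v - _‖, ← Complex.norm_I, ← norm_smul, smul_sub, smul_smul, Complex.I_mul_I,
      neg_one_smul, sub_neg_eq_add, add_comm]
  have h₁ := rotate x y
  have h₂ := rotate x (-y)
  rw [smul_neg, ← sub_eq_add_neg, neg_sub_left, norm_neg, add_comm] at h₂
  rw [inner_eq_sum_norm_sq_div_four, inner_eq_sum_norm_sq_div_four (𝕜 := ℂ) y x]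
  simp only [RCLike.I_to_complex, hI, ← map_add, ← map_sub, f.norm_map, neg_smul, sub_neg_eq_add,
    ← sub_eq_add_neg, h₁, h₂, add_comm x y, norm_sub_rev x y]

theorem LinearIsometry.inner_antilinear_conj_eq {J : E →ₗᵢ⋆[ℂ] F} {Jinv : F → E}
    (hJ : Function.RightInverse Jinv J) {T S : E → E} (hTS : ∀ x y, ⟪T x, y⟫_ℂ = ⟪x, S y⟫_ℂ)
    (x y : F) : ⟪J (T (Jinv x)), y⟫_ℂ = ⟪x, J (S (Jinv y))⟫_ℂ := by
  conv_lhs => rw [← hJ y]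
  conv_rhs => rw [← hJ x]
  rw [J.inner_map_map_of_antilinear, J.inner_map_map_of_antilinear, ← inner_conj_symm, hTS,
    inner_conj_symm]

end Antiunitary

section AdjointPair

variable {𝕜 E : Type*} [RCLike 𝕜] [NormedAddCommGroup E] [InnerProductSpace 𝕜 E]

theorem LinearMap.IsSymmetric.of_rightInverse {T S : E →ₗ[𝕜] E} (hT : T.IsSymmetric)
    (h : Function.RightInverse S T) : S.IsSymmetric := fun x y => by
  conv_lhs => rw [← h y]
  rw [← hT, h x]

theorem Function.Commute.of_adjoint {a a' T S : E → E}
    (ha : ∀ x y, ⟪a x, y⟫_𝕜 = ⟪x, a' y⟫_𝕜) (hTS : ∀ x y, ⟪T x, y⟫_𝕜 = ⟪x, S y⟫_𝕜)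
    (h : Function.Commute a' T) : Function.Commute a S := fun v => by
  have hST : ∀ x y, ⟪S x, y⟫_𝕜 = ⟪x, T y⟫_𝕜 := fun x y => by
    rw [← inner_conj_symm, ← hTS, inner_conj_symm]
  exact ext_inner_right 𝕜 fun w => by rw [ha, hST, ← h w, ← ha, ← hST]

theorem ContinuousLinearMap.inner_symmetric_conj_star_eq [CompleteSpace E] {ν μ : E →L[𝕜] E}
    (hν : (ν : E →ₗ[𝕜] E).IsSymmetric) (hμ : (μ : E →ₗ[𝕜] E).IsSymmetric) (b : E →L[𝕜] E)
    (x y : E) : ⟪ν (star b (μ x)), y⟫_𝕜 = ⟪x, μ (b (ν y))⟫_𝕜 := by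
  rw [hν.apply_clm, star_eq_adjoint, adjoint_inner_left, hμ.apply_clm]

end AdjointPair

theorem stmt1_general {H : Type*} [NormedAddCommGroup H] [InnerProductSpace ℂ H] [CompleteSpace H]
    (A : StarSubalgebra ℂ (H →L[ℂ] H))
    (J Jinv : H → H)
    (hJadd : ∀ x y, J (x + y) = J x + J y)
    (hJconj : ∀ (c : ℂ) (x : H), J (c • x) = (starRingEnd ℂ c) • J x)
    (hJiso : ∀ x, ‖J x‖ = ‖x‖)
    (hJi : ∀ x, J (Jinv x) = x)
    (ν νinv : H →L[ℂ] H)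
    (hν : ν.comp νinv = ContinuousLinearMap.id ℂ H)
    (hsa : IsSelfAdjoint ν)
    (h0 : ∀ a ∈ A, ∀ b ∈ A, ∀ v,
      a (J (ν (b (νinv (Jinv v))))) = J (ν (b (νinv (Jinv (a v)))))) :
    ∀ a ∈ A, ∀ b ∈ A, ∀ v,
      a (J (νinv (b (ν (Jinv v))))) = J (νinv (b (ν (Jinv (a v))))) := by
  intro a ha b hb
  let J' : H →ₗᵢ⋆[ℂ] H := ⟨⟨⟨J, hJadd⟩, hJconj⟩, hJiso⟩
  have hν_symm : (ν : H →ₗ[ℂ] H).IsSymmetric := hsa.isSymmetric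
  have hνinv_symm : (νinv : H →ₗ[ℂ] H).IsSymmetric :=
    hν_symm.of_rightInverse fun x => congr($hν x)
  have ha_adj : ∀ x y, ⟪a x, y⟫_ℂ = ⟪x, star a y⟫_ℂ := fun x y => by
    rw [ContinuousLinearMap.star_eq_adjoint, ContinuousLinearMap.adjoint_inner_right]
  have hb_adj : ∀ x y, ⟪J (ν (star b (νinv (Jinv x)))), y⟫_ℂ = ⟪x, J (νinv (b (ν (Jinv y))))⟫_ℂ :=
    J'.inner_antilinear_conj_eq hJi
      (ContinuousLinearMap.inner_symmetric_conj_star_eq hν_symm hνinv_symm b)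
  exact Function.Commute.of_adjoint ha_adj hb_adj (h0 _ (star_mem ha) _ (star_mem hb))

/-- For a `*`-subalgebra `A ⊆ B(H)`, an antilinear isometry `J`, and a
self-adjoint invertible `ν ∈ B(H)`, if `[a, J(νbν⁻¹)J⁻¹] = 0` for all `a, b ∈ A`, then
also `[a, J(ν⁻¹bν)J⁻¹] = 0` for all `a, b ∈ A`. -/
theorem stmt1 {H : Type*} [NormedAddCommGroup H] [InnerProductSpace ℂ H] [CompleteSpace H]
    (A : StarSubalgebra ℂ (H →L[ℂ] H))
    (J Jinv : H → H)
    (hJadd : ∀ x y, J (x + y) = J x + J y)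
    (hJconj : ∀ (c : ℂ) (x : H), J (c • x) = (starRingEnd ℂ c) • J x)
    (hJiso : ∀ x, ‖J x‖ = ‖x‖)
    (hJi : ∀ x, J (Jinv x) = x) (hiJ : ∀ x, Jinv (J x) = x)
    (ν νinv : H →L[ℂ] H)
    (hν : ν.comp νinv = ContinuousLinearMap.id ℂ H)
    (hν' : νinv.comp ν = ContinuousLinearMap.id ℂ H)
    (hsa : IsSelfAdjoint ν)
    (h0 : ∀ a ∈ A, ∀ b ∈ A, ∀ v,
      a (J (ν (b (νinv (Jinv v))))) = J (ν (b (νinv (Jinv (a v)))))) :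
    ∀ a ∈ A, ∀ b ∈ A, ∀ v,
      a (J (νinv (b (ν (Jinv v))))) = J (νinv (b (ν (Jinv (a v))))) :=
  stmt1_general A J Jinv hJadd hJconj hJiso hJi ν νinv hν hsa h0
end

section
/- Let (A, H, D, J, ν) satisfy the twisted zero- and first-order conditions, the twisted ε′-condition D J ν = ε′ ν J D (ε′ = ±1), and the regularity condition ν J ν = J, with J² = ±1. Define D′_ω = D + ω + ε′·νJ(ω)J⁻¹ν for a one-form ω. Then D′_ω satisfies the twisted ε′-condition: D′_ω J ν = ε′ ν J D′_ω. -/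
/-!
The symmetrization `ω ↦ ω + ε′ νJωJ⁻¹ν` produces, for every linear `ω`, an operator satisfying
the twisted `ε′`-condition: the regularity `νJν = J` collapses `νJν J` to `J² = ε`, and
`J⁻¹ = εJ` turns the remaining `ε′² ε ω J⁻¹ν` back into `ωJν`. Since the condition is additive,
`D′_ω = D + (ω + ε′ νJωJ⁻¹ν)` inherits it from `D`.
-/

/-- Pointwise commutator of two (not necessarily linear) maps on `H`. -/
def fcomm {H : Type*} [AddCommGroup H] (S T : H → H) : H → H :=
  fun v => S (T v) - T (S v)

/-- Conjugation of a map `T` by the antilinear bijection `J` (with inverse `Jinv`):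
the map `J T J⁻¹`. -/
def conjJ {H : Type*} (J Jinv : H → H) (T : H → H) : H → H :=
  fun v => J (T (Jinv v))

section TwistedEpsPrimeCondition

variable {H : Type*} [AddCommGroup H] [Module ℂ H]

def TwistedEpsPrimeCondition (J ν T : H → H) (ε' : ℂ) : Prop :=
  ∀ x, T (J (ν x)) = ε' • ν (J (T x))

lemma TwistedEpsPrimeCondition.add {F : Type*} [FunLike F H H] [AddMonoidHomClass F H H]
    {J : H → H} {ν : F} {ε' : ℂ} {S T : H → H}
    (hJadd : ∀ x y, J (x + y) = J x + J y)
    (hS : TwistedEpsPrimeCondition J ν S ε') (hT : TwistedEpsPrimeCondition J ν T ε') :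
    TwistedEpsPrimeCondition J ν (S + T) ε' := by
  intro x
  simp only [Pi.add_apply, hS x, hT x, hJadd, map_add, smul_add]

lemma inv_eq_smul_of_sq_eq_smul {J Jinv : H → H} {ε : ℂ} (hε : ε = 1 ∨ ε = -1)
    (hJconj : ∀ (c : ℂ) (x : H), J (c • x) = (starRingEnd ℂ c) • J x)
    (hiJ : ∀ x, Jinv (J x) = x) (hJ2 : ∀ x, J (J x) = ε • x) (y : H) :
    Jinv y = ε • J y := by
  have hJ : J (ε • J y) = y := by
    rw [hJconj, hJ2, smul_smul]
    rcases hε with rfl | rfl <;> simp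
  rw [← hJ, hiJ, hJ]

lemma twistedEpsPrimeCondition_self_add_conj {F G : Type*} [FunLike F H H] [LinearMapClass F ℂ H H]
    [FunLike G H H] [LinearMapClass G ℂ H H]
    {J Jinv : H → H} {ν : F} {ε ε' : ℂ} (hε : ε = 1 ∨ ε = -1) (hε' : ε' = 1 ∨ ε' = -1)
    (hJadd : ∀ x y, J (x + y) = J x + J y)
    (hJconj : ∀ (c : ℂ) (x : H), J (c • x) = (starRingEnd ℂ c) • J x)
    (hiJ : ∀ x, Jinv (J x) = x) (hJ2 : ∀ x, J (J x) = ε • x)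
    (hreg : ∀ x, ν (J (ν x)) = J x) (ω : G) :
    TwistedEpsPrimeCondition J ν (fun v => ω v + ε' • ν (J (ω (Jinv (ν v))))) ε' := by
  intro x
  have hJinv : J (ν x) = ε • Jinv (ν x) := by
    rw [inv_eq_smul_of_sq_eq_smul hε hJconj hiJ hJ2, smul_smul]
    rcases hε with rfl | rfl <;> simp
  have hε'ε' : ε' * starRingEnd ℂ ε' * ε = ε := by
    rcases hε' with rfl | rfl <;> simp
  dsimp only
  rw [hreg, hiJ, hJadd, hJconj, map_add, map_smul, hreg, hJ2, smul_add, smul_smul, smul_smul,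
    hε'ε', ← map_smul ω, ← hJinv, add_comm]

end TwistedEpsPrimeCondition

theorem stmt6_general {H : Type*} [NormedAddCommGroup H] [InnerProductSpace ℂ H]
    (J Jinv : H → H)
    (hJadd : ∀ x y, J (x + y) = J x + J y)
    (hJconj : ∀ (c : ℂ) (x : H), J (c • x) = (starRingEnd ℂ c) • J x)
    (hiJ : ∀ x, Jinv (J x) = x)
    (ε : ℂ) (hε : ε = 1 ∨ ε = -1)
    (hJ2 : ∀ x, J (J x) = ε • x)
    (ε' : ℂ) (hε' : ε' = 1 ∨ ε' = -1)
    (D : H →L[ℂ] H)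
    (ν : H →L[ℂ] H)
    (hreg : ∀ x, ν (J (ν x)) = J x)
    (heps : ∀ x, D (J (ν x)) = ε' • ν (J (D x)))
    (n : ℕ) (c d : Fin n → (H →L[ℂ] H))
    -- `D′_ω = D + ω + ε′·νJωJ⁻¹ν`, with `ω = Σᵢ cᵢ[D, dᵢ]`
    (Dω' : H → H)
    (hDω' : ∀ v, Dω' v
      = D v + (∑ i, c i * (D * d i - d i * D)) v
        + ε' • ν (J ((∑ i, c i * (D * d i - d i * D)) (Jinv (ν v))))) :
    ∀ v, Dω' (J (ν v)) = ε' • ν (J (Dω' v)) := by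
  set ω : H →L[ℂ] H := ∑ i, c i * (D * d i - d i * D)
  have hDω : Dω' = ⇑D + fun v => ω v + ε' • ν (J (ω (Jinv (ν v)))) :=
    funext fun v => by rw [hDω', add_assoc]; rfl
  rw [hDω]
  exact TwistedEpsPrimeCondition.add hJadd heps
    (twistedEpsPrimeCondition_self_add_conj hε hε' hJadd hJconj hiJ hJ2 hreg ω)

/-- Under the twisted zero- and first-order conditions, the twisted
`ε′`-condition `D J ν = ε′ ν J D` and the regularity condition `ν J ν = J` (with
`J² = ±1`), the modified fluctuation `D′_ω = D + ω + ε′·νJ(ω)J⁻¹ν` of a one-form `ω`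
again satisfies the twisted `ε′`-condition `D′_ω J ν = ε′ ν J D′_ω`. -/
theorem stmt6 {H : Type*} [NormedAddCommGroup H] [InnerProductSpace ℂ H]
    (A : Subalgebra ℂ (H →L[ℂ] H))
    (J Jinv : H → H)
    (hJadd : ∀ x y, J (x + y) = J x + J y)
    (hJconj : ∀ (c : ℂ) (x : H), J (c • x) = (starRingEnd ℂ c) • J x)
    (hJi : ∀ x, J (Jinv x) = x) (hiJ : ∀ x, Jinv (J x) = x)
    (ε : ℂ) (hε : ε = 1 ∨ ε = -1)
    (hJ2 : ∀ x, J (J x) = ε • x)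
    (ε' : ℂ) (hε' : ε' = 1 ∨ ε' = -1)
    (D : H →L[ℂ] H)
    (ν νinv : H →L[ℂ] H)
    (hν : ν.comp νinv = ContinuousLinearMap.id ℂ H)
    (hν' : νinv.comp ν = ContinuousLinearMap.id ℂ H)
    (hreg : ∀ x, ν (J (ν x)) = J x)
    (heps : ∀ x, D (J (ν x)) = ε' • ν (J (D x)))
    (h0 : ∀ a ∈ A, ∀ b ∈ A, ∀ v,
      a (conjJ J Jinv (⇑ν ∘ ⇑b ∘ ⇑νinv) v) = conjJ J Jinv (⇑ν ∘ ⇑b ∘ ⇑νinv) (a v))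
    (h0' : ∀ a ∈ A, ∀ b ∈ A, ∀ v,
      a (conjJ J Jinv (⇑νinv ∘ ⇑b ∘ ⇑ν) v) = conjJ J Jinv (⇑νinv ∘ ⇑b ∘ ⇑ν) (a v))
    (h1 : ∀ a ∈ A, ∀ b ∈ A, ∀ v,
      fcomm ⇑D ⇑a (conjJ J Jinv (⇑ν ∘ ⇑b ∘ ⇑νinv) v)
        = conjJ J Jinv (⇑νinv ∘ ⇑b ∘ ⇑ν) (fcomm ⇑D ⇑a v))
    (n : ℕ) (c d : Fin n → (H →L[ℂ] H))
    (hc : ∀ i, c i ∈ A) (hd : ∀ i, d i ∈ A)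
    -- `D′_ω = D + ω + ε′·νJωJ⁻¹ν`, with `ω = Σᵢ cᵢ[D, dᵢ]`
    (Dω' : H → H)
    (hDω' : ∀ v, Dω' v
      = D v + (∑ i, c i * (D * d i - d i * D)) v
        + ε' • ν (J ((∑ i, c i * (D * d i - d i * D)) (Jinv (ν v))))) :
    ∀ v, Dω' (J (ν v)) = ε' • ν (J (Dω' v)) :=
  stmt6_general J Jinv hJadd hJconj hiJ ε hε hJ2 ε' hε' D ν hreg heps n c d Dω' hDω'
end

section
/- Let (A, H, D, J) be a real spectral triple satisfying the zero-order condition [a, JbJ⁻¹] = 0 and first-order condition [D,a]·JbJ⁻¹ = JbJ⁻¹·[D,a] for all a, b ∈ A. Let k ∈ A be positive and invertible, set ν = k⁻¹·JkJ⁻¹ and D_k = (JkJ⁻¹)D(JkJ⁻¹). Then the twisted first-order condition holds: [D_k, a]·J(νbν⁻¹)J⁻¹ = J(ν⁻¹bν)J⁻¹·[D_k, a] for all a, b ∈ A, where νbν⁻¹ = k⁻¹bk. -/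
open Function

section conjJ

variable {H : Type*} {J Jinv : H → H}

theorem conjJ_comp (hiJ : LeftInverse Jinv J) (S T : H → H) :
    conjJ J Jinv (S ∘ T) = conjJ J Jinv S ∘ conjJ J Jinv T := by
  funext v
  simp only [conjJ, comp_apply, hiJ _]

theorem Function.LeftInverse.conjJ (hJi : LeftInverse J Jinv) (hiJ : LeftInverse Jinv J)
    {S T : H → H} (hST : LeftInverse S T) :
    LeftInverse (conjJ J Jinv S) (conjJ J Jinv T) := by
  intro v
  simp only [_root_.conjJ, hiJ _, hST _, hJi _]

theorem conjJ_map_sub [AddCommGroup H] (hJadd : ∀ x y, J (x + y) = J x + J y)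
    (hJi : LeftInverse J Jinv) (hiJ : LeftInverse Jinv J)
    {F : Type*} [FunLike F H H] [AddMonoidHomClass F H H] (T : F) (x y : H) :
    conjJ J Jinv T (x - y) = conjJ J Jinv T x - conjJ J Jinv T y := by
  let Je : H ≃+ H := AddEquiv.mk' ⟨J, Jinv, hiJ, hJi⟩ hJadd
  change Je (T (Je.symm (x - y))) = Je (T (Je.symm x)) - Je (T (Je.symm y))
  simp only [map_sub]

end conjJ

theorem fcomm_comp_comp_apply {H : Type*} [AddCommGroup H] {S a c : H → H}
    (hac : ∀ x, a (c x) = c (a x)) (hc : ∀ x y, c (x - y) = c x - c y) (v : H) :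
    fcomm (c ∘ S ∘ c) a v = c (fcomm S a (c v)) := by
  simp only [fcomm, comp_apply, hac, hc]

theorem stmt8_general {H : Type*} [NormedAddCommGroup H] [InnerProductSpace ℂ H] [CompleteSpace H]
    (A : StarSubalgebra ℂ (H →L[ℂ] H))
    (J Jinv : H → H)
    (hJadd : ∀ x y, J (x + y) = J x + J y)
    (hJi : ∀ x, J (Jinv x) = x) (hiJ : ∀ x, Jinv (J x) = x)
    (D : H →L[ℂ] H)
    (h0 : ∀ a ∈ A, ∀ b ∈ A, ∀ v,
      a (conjJ J Jinv ⇑b v) = conjJ J Jinv ⇑b (a v))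
    (h1 : ∀ a ∈ A, ∀ b ∈ A, ∀ v,
      fcomm ⇑D ⇑a (conjJ J Jinv ⇑b v) = conjJ J Jinv ⇑b (fcomm ⇑D ⇑a v))
    (k kinv : H →L[ℂ] H) (hkA : k ∈ A)
    (hk : k.comp kinv = ContinuousLinearMap.id ℂ H)
    (hk' : kinv.comp k = ContinuousLinearMap.id ℂ H) :
    ∀ a ∈ A, ∀ b ∈ A, ∀ v,
      fcomm (conjJ J Jinv ⇑k ∘ ⇑D ∘ conjJ J Jinv ⇑k) ⇑a
          (conjJ J Jinv (⇑kinv ∘ ⇑b ∘ ⇑k) v)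
        = conjJ J Jinv (⇑k ∘ ⇑b ∘ ⇑kinv)
            (fcomm (conjJ J Jinv ⇑k ∘ ⇑D ∘ conjJ J Jinv ⇑k) ⇑a v) := by
  intro a ha b hb v
  have hk_kinv : LeftInverse (conjJ J Jinv k) (conjJ J Jinv kinv) :=
    LeftInverse.conjJ hJi hiJ fun x => by simpa using DFunLike.congr_fun hk x
  have hkinv_k : LeftInverse (conjJ J Jinv kinv) (conjJ J Jinv k) :=
    LeftInverse.conjJ hJi hiJ fun x => by simpa using DFunLike.congr_fun hk' x
  have hDk := fcomm_comp_comp_apply (S := D) (h0 a ha k hkA) (conjJ_map_sub hJadd hJi hiJ k)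
  simp only [conjJ_comp hiJ, comp_apply, hDk, hk_kinv _, hkinv_k _, h1 a ha b hb]

/-- Let `(A, H, D, J)` be a real spectral triple satisfying the zero- and
first-order conditions, `k ∈ A` positive invertible, `ν = k⁻¹·JkJ⁻¹` and
`D_k = (JkJ⁻¹)D(JkJ⁻¹)`. Then the twisted first-order condition
`[D_k, a]·J(k⁻¹bk)J⁻¹ = J(kbk⁻¹)J⁻¹·[D_k, a]` holds for all `a, b ∈ A`
(here `νbν⁻¹ = k⁻¹bk`). -/
theorem stmt8 {H : Type*} [NormedAddCommGroup H] [InnerProductSpace ℂ H] [CompleteSpace H]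
    (A : StarSubalgebra ℂ (H →L[ℂ] H))
    (J Jinv : H → H)
    (hJadd : ∀ x y, J (x + y) = J x + J y)
    (hJconj : ∀ (c : ℂ) (x : H), J (c • x) = (starRingEnd ℂ c) • J x)
    (hJiso : ∀ x, ‖J x‖ = ‖x‖)
    (hJi : ∀ x, J (Jinv x) = x) (hiJ : ∀ x, Jinv (J x) = x)
    (D : H →L[ℂ] H)
    (h0 : ∀ a ∈ A, ∀ b ∈ A, ∀ v,
      a (conjJ J Jinv ⇑b v) = conjJ J Jinv ⇑b (a v))
    (h1 : ∀ a ∈ A, ∀ b ∈ A, ∀ v,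
      fcomm ⇑D ⇑a (conjJ J Jinv ⇑b v) = conjJ J Jinv ⇑b (fcomm ⇑D ⇑a v))
    (k kinv : H →L[ℂ] H) (hkA : k ∈ A)
    (hkpos : k.IsPositive)
    (hk : k.comp kinv = ContinuousLinearMap.id ℂ H)
    (hk' : kinv.comp k = ContinuousLinearMap.id ℂ H) :
    ∀ a ∈ A, ∀ b ∈ A, ∀ v,
      fcomm (conjJ J Jinv ⇑k ∘ ⇑D ∘ conjJ J Jinv ⇑k) ⇑a
          (conjJ J Jinv (⇑kinv ∘ ⇑b ∘ ⇑k) v)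
        = conjJ J Jinv (⇑k ∘ ⇑b ∘ ⇑kinv)
            (fcomm (conjJ J Jinv ⇑k ∘ ⇑D ∘ conjJ J Jinv ⇑k) ⇑a v) :=
  stmt8_general A J Jinv hJadd hJi hiJ D h0 h1 k kinv hkA hk hk'
end

section
/- Let (A, H, D, J) satisfy the ε′-condition DJ = ε′JD and the first-order condition, let k ∈ A be positive invertible with JkJ⁻¹ commuting with all of A, and D_k = (JkJ⁻¹)D(JkJ⁻¹), ν = k⁻¹JkJ⁻¹. If additionally [D, k] commutes suitably so that D_k J ν can be simplified (specifically kDk J = ε′ k J D k J⁻¹·J after applying DJ = ε′JD), then the twisted ε′-condition holds: D_k J ν = ε′ ν J D_k. -/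
open Function

def twistedDirac {H : Type*} (J Jinv k D : H → H) : H → H :=
  conjJ J Jinv k ∘ D ∘ conjJ J Jinv k

def realityTwist {H : Type*} (J Jinv k kinv : H → H) : H → H :=
  kinv ∘ conjJ J Jinv k

theorem conjJ_apply_apply {H : Type*} {J Jinv : H → H} (hiJ : LeftInverse Jinv J) (T : H → H)
    (x : H) : conjJ J Jinv T (J x) = J (T x) := by
  rw [conjJ, hiJ x]

section TwistedReality

variable {H F : Type*} [AddCommGroup H] [Module ℂ H] [FunLike F H H] [LinearMapClass F ℂ H H]
  {J Jinv : H → H}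

theorem inv_apply_eq_smul_apply {ε : ℂ} (hJi : RightInverse Jinv J)
    (hJ2 : ∀ x, J (J x) = ε • x) (hε : ε * ε = 1) (x : H) : Jinv x = ε • J x := by
  have hJ : J x = ε • Jinv x := by simpa only [hJi x] using hJ2 (Jinv x)
  rw [hJ, smul_smul, hε, one_smul]

theorem twistedDirac_apply_realityTwist {ε' : ℂ} (hiJ : LeftInverse Jinv J)
    (hJconj : ∀ (c : ℂ) (x : H), J (c • x) = (starRingEnd ℂ c) • J x)
    (hε' : starRingEnd ℂ ε' = ε') (D : H → H) (heps : ∀ v, D (J v) = ε' • J (D v))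
    (k kinv : F) (hk : ∀ x, k (kinv x) = x) (v : H) :
    twistedDirac J Jinv k D (J (realityTwist J Jinv k kinv v))
      = ε' • J (k (D (conjJ J Jinv k v))) := by
  have hJsmul : ∀ x, J (ε' • x) = ε' • J x := fun x => by rw [hJconj, hε']
  simp only [twistedDirac, realityTwist, comp_apply, conjJ_apply_apply hiJ, hk, heps,
    ← hJsmul, map_smul]

theorem realityTwist_apply_twistedDirac {ε : ℂ} (hJi : RightInverse Jinv J)
    (hiJ : LeftInverse Jinv J) (hJ2 : ∀ x, J (J x) = ε • x) (hε : ε * ε = 1) (D : H → H)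
    (k kinv : F) (hk : ∀ x, kinv (k x) = x)
    (hkK : ∀ x, k (conjJ J Jinv k x) = conjJ J Jinv k (k x)) (v : H) :
    realityTwist J Jinv k kinv (J (twistedDirac J Jinv k D v))
      = J (k (D (conjJ J Jinv k v))) := by
  have hJK : ∀ x, J (conjJ J Jinv k x) = ε • k (Jinv x) := fun x => hJ2 _
  rw [realityTwist, comp_apply, conjJ_apply_apply hiJ, twistedDirac, comp_apply, comp_apply, hkK,
    hJK, map_smul, hk, inv_apply_eq_smul_apply hJi hJ2 hε, smul_smul, hε, one_smul]

end TwistedReality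

theorem stmt10_general {H : Type*} [NormedAddCommGroup H] [InnerProductSpace ℂ H] [CompleteSpace H]
    (A : StarSubalgebra ℂ (H →L[ℂ] H))
    (J Jinv : H → H)
    (hJconj : ∀ (c : ℂ) (x : H), J (c • x) = (starRingEnd ℂ c) • J x)
    (hJi : ∀ x, J (Jinv x) = x) (hiJ : ∀ x, Jinv (J x) = x)
    (ε : ℂ) (hε : ε = 1 ∨ ε = -1)
    (hJ2 : ∀ x, J (J x) = ε • x)
    (ε' : ℂ) (hε' : ε' = 1 ∨ ε' = -1)
    (D : H →L[ℂ] H)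
    -- the `ε′`-condition `D J = ε′ J D`
    (heps : ∀ v, D (J v) = ε' • J (D v))
    (k kinv : H →L[ℂ] H) (hkA : k ∈ A)
    (hk : k.comp kinv = ContinuousLinearMap.id ℂ H)
    (hk' : kinv.comp k = ContinuousLinearMap.id ℂ H)
    -- `JkJ⁻¹` commutes with all of `A`
    (hcomm : ∀ a ∈ A, ∀ v, a (J (k (Jinv v))) = J (k (Jinv (a v)))) :
    -- `D_k J ν = ε′ ν J D_k` for `D_k = (JkJ⁻¹)D(JkJ⁻¹)` and `ν = k⁻¹JkJ⁻¹`
    ∀ v,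
      (conjJ J Jinv ⇑k ∘ ⇑D ∘ conjJ J Jinv ⇑k) (J (kinv (J (k (Jinv v)))))
        = ε' • kinv (J (k (Jinv (J ((conjJ J Jinv ⇑k ∘ ⇑D ∘ conjJ J Jinv ⇑k) v))))) := by
  intro v
  have hε'real : starRingEnd ℂ ε' = ε' := by rcases hε' with rfl | rfl <;> simp
  have hε2 : ε * ε = 1 := by rcases hε with rfl | rfl <;> norm_num
  calc twistedDirac J Jinv k D (J (realityTwist J Jinv k kinv v))
      _ = ε' • J (k (D (conjJ J Jinv k v))) :=
        twistedDirac_apply_realityTwist hiJ hJconj hε'real D heps k kinv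
          (fun x => congr($hk x)) v
      _ = ε' • realityTwist J Jinv k kinv (J (twistedDirac J Jinv k D v)) := by
        rw [realityTwist_apply_twistedDirac hJi hiJ hJ2 hε2 D k kinv (fun x => congr($hk' x))
          (hcomm k hkA)]

/-- Let `(A, H, D, J)` satisfy the `ε′`-condition `DJ = ε′JD` and the
first-order condition, `k ∈ A` positive invertible with `JkJ⁻¹` commuting with all of
`A`, `D_k = (JkJ⁻¹)D(JkJ⁻¹)` and `ν = k⁻¹JkJ⁻¹`. Then the twisted `ε′`-condition holds:
`D_k J ν = ε′ ν J D_k`. -/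
theorem stmt10 {H : Type*} [NormedAddCommGroup H] [InnerProductSpace ℂ H] [CompleteSpace H]
    (A : StarSubalgebra ℂ (H →L[ℂ] H))
    (J Jinv : H → H)
    (hJadd : ∀ x y, J (x + y) = J x + J y)
    (hJconj : ∀ (c : ℂ) (x : H), J (c • x) = (starRingEnd ℂ c) • J x)
    (hJi : ∀ x, J (Jinv x) = x) (hiJ : ∀ x, Jinv (J x) = x)
    (ε : ℂ) (hε : ε = 1 ∨ ε = -1)
    (hJ2 : ∀ x, J (J x) = ε • x)
    (ε' : ℂ) (hε' : ε' = 1 ∨ ε' = -1)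
    (D : H →L[ℂ] H)
    -- the `ε′`-condition `D J = ε′ J D`
    (heps : ∀ v, D (J v) = ε' • J (D v))
    -- the first-order condition
    (h1 : ∀ a ∈ A, ∀ b ∈ A, ∀ v,
      fcomm ⇑D ⇑a (conjJ J Jinv ⇑b v) = conjJ J Jinv ⇑b (fcomm ⇑D ⇑a v))
    (k kinv : H →L[ℂ] H) (hkA : k ∈ A)
    (hkpos : k.IsPositive)
    (hk : k.comp kinv = ContinuousLinearMap.id ℂ H)
    (hk' : kinv.comp k = ContinuousLinearMap.id ℂ H)
    -- `JkJ⁻¹` commutes with all of `A`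
    (hcomm : ∀ a ∈ A, ∀ v, a (J (k (Jinv v))) = J (k (Jinv (a v)))) :
    -- `D_k J ν = ε′ ν J D_k` for `D_k = (JkJ⁻¹)D(JkJ⁻¹)` and `ν = k⁻¹JkJ⁻¹`
    ∀ v,
      (conjJ J Jinv ⇑k ∘ ⇑D ∘ conjJ J Jinv ⇑k) (J (kinv (J (k (Jinv v)))))
        = ε' • kinv (J (k (Jinv (J ((conjJ J Jinv ⇑k ∘ ⇑D ∘ conjJ J Jinv ⇑k) v))))) :=
  stmt10_general A J Jinv hJconj hJi hiJ ε hε hJ2 ε' hε' D heps k kinv hkA hk hk' hcomm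
end

section
/- (Tensor product, first-order part) With notation as above, suppose additionally D′ is an operator on H′ satisfying [D′,a′]·J′(ν′b′ν′⁻¹)J′⁻¹ = J′(ν′⁻¹b′ν′)J′⁻¹·[D′,a′] for all a′,b′ ∈ A′. Then D = D′⊗1 satisfies the twisted first-order condition on H′⊗H″ with twist ν = ν′⊗1 and real structure J = J′⊗J″: [D, a′⊗a″]·J(ν(b′⊗b″)ν⁻¹)J⁻¹ = J(ν⁻¹(b′⊗b″)ν)J⁻¹·[D, a′⊗a″]. -/
open scoped TensorProduct

/-- The operator `f ⊗ g` on the (algebraic) tensor product `H' ⊗ H''`. -/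
noncomputable def opTensor {H' H'' : Type*}
    [NormedAddCommGroup H'] [InnerProductSpace ℂ H']
    [NormedAddCommGroup H''] [InnerProductSpace ℂ H'']
    (f : H' →L[ℂ] H') (g : H'' →L[ℂ] H'') : H' ⊗[ℂ] H'' →ₗ[ℂ] H' ⊗[ℂ] H'' :=
  TensorProduct.map f.toLinearMap g.toLinearMap

/-! On a pure tensor, `[D′⊗1, a′⊗a″] = [D′,a′]⊗a″` and the conjugated twisted operator
`J(ν(b′⊗b″)ν⁻¹)J⁻¹` is `J′ν′b′ν′⁻¹J′⁻¹ ⊗ J″b″J″⁻¹`. So on `x ⊗ y` the first-order condition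
splits into the twisted first-order condition for `D′` in the first factor and the zero-order
condition for `A″` in the second. Both sides are additive in the vector, which extends the
identity from pure tensors to all of `H′ ⊗ H″`. -/

theorem TensorProduct.funext_of_map_add {R M N P : Type*} [CommSemiring R]
    [AddCommMonoid M] [Module R M] [AddCommMonoid N] [Module R N] [AddGroup P]
    {f g : M ⊗[R] N → P} (hf : ∀ u v, f (u + v) = f u + f v)
    (hg : ∀ u v, g (u + v) = g u + g v) (H : ∀ x y, f (x ⊗ₜ y) = g (x ⊗ₜ y)) : f = g :=
  funext fun z => z.induction_on
    ((AddMonoidHom.mk' f hf).map_zero.trans (AddMonoidHom.mk' g hg).map_zero.symm) H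
    fun u v hu hv => by rw [hf, hg, hu, hv]

section

variable {H' H'' : Type*} [NormedAddCommGroup H'] [InnerProductSpace ℂ H']
  [NormedAddCommGroup H''] [InnerProductSpace ℂ H'']

theorem opTensor_tmul (f : H' →L[ℂ] H') (g : H'' →L[ℂ] H'') (x : H') (y : H'') :
    opTensor f g (x ⊗ₜ y) = f x ⊗ₜ g y :=
  rfl

theorem opTensor_commutator (D a : H' →L[ℂ] H') (b : H'' →L[ℂ] H'') :
    opTensor D 1 ∘ₗ opTensor a b - opTensor a b ∘ₗ opTensor D 1 = opTensor (D * a - a * D) b :=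
  TensorProduct.ext' fun x y => by
    simp only [LinearMap.sub_apply, LinearMap.comp_apply, opTensor_tmul, one_apply_eq_self,
      _root_.sub_apply, mul_apply_eq_comp, TensorProduct.sub_tmul]

end

theorem stmt12_general {H' H'' : Type*}
    [NormedAddCommGroup H'] [InnerProductSpace ℂ H'] [CompleteSpace H']
    [NormedAddCommGroup H''] [InnerProductSpace ℂ H''] [CompleteSpace H'']
    (A' : StarSubalgebra ℂ (H' →L[ℂ] H')) (A'' : StarSubalgebra ℂ (H'' →L[ℂ] H''))
    (J' J'inv : H' → H')
    (J'' J''inv : H'' → H'')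
    (ν' ν'inv : H' →L[ℂ] H')
    -- zero-order condition on the second factor
    (h0'' : ∀ a'' ∈ A'', ∀ b'' ∈ A'', ∀ y,
      a'' (J'' (b'' (J''inv y))) = J'' (b'' (J''inv (a'' y))))
    -- twisted first-order condition for `D′` on the first factor
    (D' : H' →L[ℂ] H')
    (h1' : ∀ a' ∈ A', ∀ b' ∈ A', ∀ x,
      (D' (a' (J' (ν' (b' (ν'inv (J'inv x)))))) - a' (D' (J' (ν' (b' (ν'inv (J'inv x)))))))
        = J' (ν'inv (b' (ν' (J'inv (D' (a' x) - a' (D' x)))))))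
    -- `J = J′⊗J″` and its inverse `J⁻¹ = J′⁻¹⊗J″⁻¹`
    (J Jinv : H' ⊗[ℂ] H'' → H' ⊗[ℂ] H'')
    (hJadd : ∀ u v, J (u + v) = J u + J v)
    (hJinvadd : ∀ u v, Jinv (u + v) = Jinv u + Jinv v)
    (hJ : ∀ (x : H') (y : H''), J (x ⊗ₜ[ℂ] y) = J' x ⊗ₜ[ℂ] J'' y)
    (hJinv : ∀ (x : H') (y : H''), Jinv (x ⊗ₜ[ℂ] y) = J'inv x ⊗ₜ[ℂ] J''inv y) :
    ∀ a' ∈ A', ∀ a'' ∈ A'', ∀ b' ∈ A', ∀ b'' ∈ A'', ∀ v,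
      (opTensor D' 1 ∘ₗ opTensor a' a'' - opTensor a' a'' ∘ₗ opTensor D' 1)
          (J (opTensor ν' 1 (opTensor b' b'' (opTensor ν'inv 1 (Jinv v)))))
        = J (opTensor ν'inv 1 (opTensor b' b'' (opTensor ν' 1 (Jinv
            ((opTensor D' 1 ∘ₗ opTensor a' a'' - opTensor a' a'' ∘ₗ opTensor D' 1) v))))) := by
  intro a' ha' a'' ha'' b' hb' b'' hb''
  rw [opTensor_commutator]
  refine congrFun (TensorProduct.funext_of_map_add (fun u v => ?_) (fun u v => ?_)
    fun x y => ?_)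
  · simp only [hJinvadd, map_add, hJadd]
  · simp only [hJinvadd, map_add, hJadd]
  · simp only [hJinv, hJ, opTensor_tmul, one_apply_eq_self, _root_.sub_apply, mul_apply_eq_comp]
    rw [h1' a' ha' b' hb' x, h0'' a'' ha'' b'' hb'' y]

/-- tensor product, first-order part: If `D′` satisfies the twisted
first-order condition on `H′` with twist `ν′` and real structure `J′`, and the
zero-order conditions of the previous statement hold, then `D = D′⊗1` satisfies the
twisted first-order condition on `H′⊗H″` with twist `ν = ν′⊗1` and `J = J′⊗J″`. -/
theorem stmt12 {H' H'' : Type*}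
    [NormedAddCommGroup H'] [InnerProductSpace ℂ H'] [CompleteSpace H']
    [NormedAddCommGroup H''] [InnerProductSpace ℂ H''] [CompleteSpace H'']
    (A' : StarSubalgebra ℂ (H' →L[ℂ] H')) (A'' : StarSubalgebra ℂ (H'' →L[ℂ] H''))
    (J' J'inv : H' → H')
    (hJ'add : ∀ x y, J' (x + y) = J' x + J' y)
    (hJ'conj : ∀ (c : ℂ) (x : H'), J' (c • x) = (starRingEnd ℂ c) • J' x)
    (hJ'1 : ∀ x, J' (J'inv x) = x) (hJ'2 : ∀ x, J'inv (J' x) = x)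
    (J'' J''inv : H'' → H'')
    (hJ''add : ∀ x y, J'' (x + y) = J'' x + J'' y)
    (hJ''conj : ∀ (c : ℂ) (x : H''), J'' (c • x) = (starRingEnd ℂ c) • J'' x)
    (hJ''1 : ∀ x, J'' (J''inv x) = x) (hJ''2 : ∀ x, J''inv (J'' x) = x)
    (ν' ν'inv : H' →L[ℂ] H')
    (hν' : ν'.comp ν'inv = ContinuousLinearMap.id ℂ H')
    (hν'2 : ν'inv.comp ν' = ContinuousLinearMap.id ℂ H')
    -- twisted zero-order condition on the first factor
    (h0' : ∀ a' ∈ A', ∀ b' ∈ A', ∀ x,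
      a' (J' (ν' (b' (ν'inv (J'inv x))))) = J' (ν' (b' (ν'inv (J'inv (a' x))))))
    -- zero-order condition on the second factor
    (h0'' : ∀ a'' ∈ A'', ∀ b'' ∈ A'', ∀ y,
      a'' (J'' (b'' (J''inv y))) = J'' (b'' (J''inv (a'' y))))
    -- twisted first-order condition for `D′` on the first factor
    (D' : H' →L[ℂ] H')
    (h1' : ∀ a' ∈ A', ∀ b' ∈ A', ∀ x,
      (D' (a' (J' (ν' (b' (ν'inv (J'inv x)))))) - a' (D' (J' (ν' (b' (ν'inv (J'inv x)))))))
        = J' (ν'inv (b' (ν' (J'inv (D' (a' x) - a' (D' x)))))))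
    -- `J = J′⊗J″` and its inverse `J⁻¹ = J′⁻¹⊗J″⁻¹`
    (J Jinv : H' ⊗[ℂ] H'' → H' ⊗[ℂ] H'')
    (hJadd : ∀ u v, J (u + v) = J u + J v)
    (hJinvadd : ∀ u v, Jinv (u + v) = Jinv u + Jinv v)
    (hJ : ∀ (x : H') (y : H''), J (x ⊗ₜ[ℂ] y) = J' x ⊗ₜ[ℂ] J'' y)
    (hJinv : ∀ (x : H') (y : H''), Jinv (x ⊗ₜ[ℂ] y) = J'inv x ⊗ₜ[ℂ] J''inv y) :
    ∀ a' ∈ A', ∀ a'' ∈ A'', ∀ b' ∈ A', ∀ b'' ∈ A'', ∀ v,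
      (opTensor D' 1 ∘ₗ opTensor a' a'' - opTensor a' a'' ∘ₗ opTensor D' 1)
          (J (opTensor ν' 1 (opTensor b' b'' (opTensor ν'inv 1 (Jinv v)))))
        = J (opTensor ν'inv 1 (opTensor b' b'' (opTensor ν' 1 (Jinv
            ((opTensor D' 1 ∘ₗ opTensor a' a'' - opTensor a' a'' ∘ₗ opTensor D' 1) v))))) :=
  stmt12_general A' A'' J' J'inv J'' J''inv ν' ν'inv h0'' D' h1' J Jinv hJadd hJinvadd hJ hJinv
end
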